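/- Let (Δ, γ) be a connected voltage graph, let G = ⟨γ(E_Δ)⟩ be the group generated by the voltages, let v₀ be a base vertex of Δ, let S be a spanning tree set of Δ, and let Γ₀ be the connected component of the derived graph Δ ×_γ G containing the vertex (v₀, 1_G). Then the set H = {h ∈ G : (v₀, h) is a vertex of Γ₀} is a subgroup of G, and H = ⟨γ_S(E_Δ)⟩, the subgroup generated by the values of the condensation γ_S of γ with respect to S and v₀. -/

import Mathlib

namespace VG

/-- A graph (directed multigraph): vertices, edges, initial and terminal endpoint maps. -/
structure MGraph : Type 1 where
  V : Type
  E : Type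
  ι : E → V
  τ : E → V

/-- A homomorphism of graphs. -/
structure Hom (Γ Δ : MGraph) where
  onV : Γ.V → Δ.V
  onE : Γ.E → Δ.E
  map_ι : ∀ e, Δ.ι (onE e) = onV (Γ.ι e)
  map_τ : ∀ e, Δ.τ (onE e) = onV (Γ.τ e)

/-- Composition of homomorphisms. -/
def Hom.comp {Γ₁ Γ₂ Γ₃ : MGraph} (g : Hom Γ₂ Γ₃) (f : Hom Γ₁ Γ₂) : Hom Γ₁ Γ₃ where
  onV := g.onV ∘ f.onV
  onE := g.onE ∘ f.onE
  map_ι e := by simp only [Function.comp_apply]; rw [g.map_ι, f.map_ι]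
  map_τ e := by simp only [Function.comp_apply]; rw [g.map_τ, f.map_τ]

/-- An isomorphism of graphs: a homomorphism bijective on vertices and on edges. -/
structure Iso (Γ Δ : MGraph) where
  onV : Γ.V ≃ Δ.V
  onE : Γ.E ≃ Δ.E
  map_ι : ∀ e, Δ.ι (onE e) = onV (Γ.ι e)
  map_τ : ∀ e, Δ.τ (onE e) = onV (Γ.τ e)

def Iso.toHom {Γ Δ : MGraph} (f : Iso Γ Δ) : Hom Γ Δ :=
  ⟨f.onV, f.onE, f.map_ι, f.map_τ⟩

/-- The automorphisms of a graph. -/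
abbrev Aut (Γ : MGraph) := Iso Γ Γ

theorem Iso.ext' {Γ Δ : MGraph} {f g : Iso Γ Δ} (hV : f.onV = g.onV) (hE : f.onE = g.onE) :
    f = g := by
  cases f; cases g; cases hV; cases hE; rfl

instance (Γ : MGraph) : Group (Aut Γ) where
  one := ⟨Equiv.refl _, Equiv.refl _, fun _ => rfl, fun _ => rfl⟩
  mul g h := ⟨h.onV.trans g.onV, h.onE.trans g.onE,
    fun e => by simp only [Equiv.trans_apply]; rw [g.map_ι, h.map_ι],
    fun e => by simp only [Equiv.trans_apply]; rw [g.map_τ, h.map_τ]⟩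
  inv g := ⟨g.onV.symm, g.onE.symm,
    fun e => by
      have h := g.map_ι (g.onE.symm e)
      rw [Equiv.apply_symm_apply] at h
      rw [h, Equiv.symm_apply_apply],
    fun e => by
      have h := g.map_τ (g.onE.symm e)
      rw [Equiv.apply_symm_apply] at h
      rw [h, Equiv.symm_apply_apply]⟩
  mul_assoc a b c := Iso.ext' (Equiv.ext fun _ => rfl) (Equiv.ext fun _ => rfl)
  one_mul a := Iso.ext' (Equiv.ext fun _ => rfl) (Equiv.ext fun _ => rfl)
  mul_one a := Iso.ext' (Equiv.ext fun _ => rfl) (Equiv.ext fun _ => rfl)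
  inv_mul_cancel a :=
    Iso.ext' (Equiv.ext fun x => a.onV.symm_apply_apply x)
      (Equiv.ext fun x => a.onE.symm_apply_apply x)

theorem Aut.mul_onV {Γ : MGraph} (g h : Aut Γ) (v : Γ.V) : (g * h).onV v = g.onV (h.onV v) := rfl
theorem Aut.mul_onE {Γ : MGraph} (g h : Aut Γ) (e : Γ.E) : (g * h).onE e = g.onE (h.onE e) := rfl
theorem Aut.one_onV {Γ : MGraph} (v : Γ.V) : (1 : Aut Γ).onV v = v := rfl
theorem Aut.inv_onV {Γ : MGraph} (g : Aut Γ) (v : Γ.V) : g⁻¹.onV v = g.onV.symm v := rfl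

/-- The outset of a vertex. -/
def Out (Γ : MGraph) (v : Γ.V) : Set Γ.E := {e | Γ.ι e = v}

/-- The inset of a vertex. -/
def In (Γ : MGraph) (v : Γ.V) : Set Γ.E := {e | Γ.τ e = v}

/-- A covering: a surjective homomorphism restricting to bijections on out-sets and in-sets. -/
structure IsCovering {Γ Δ : MGraph} (φ : Hom Γ Δ) : Prop where
  surjV : Function.Surjective φ.onV
  surjE : Function.Surjective φ.onE
  bijOut : ∀ v : Γ.V, Set.BijOn φ.onE (Out Γ v) (Out Δ (φ.onV v))
  bijIn : ∀ v : Γ.V, Set.BijOn φ.onE (In Γ v) (In Δ (φ.onV v))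

/-- The cover group of a covering: automorphisms `g` of `Γ` with `φ ∘ g = φ`. -/
def coverGroup {Γ Δ : MGraph} (φ : Hom Γ Δ) : Subgroup (Aut Γ) where
  carrier := {g | (∀ v, φ.onV (g.onV v) = φ.onV v) ∧ (∀ e, φ.onE (g.onE e) = φ.onE e)}
  one_mem' := ⟨fun _ => rfl, fun _ => rfl⟩
  mul_mem' := by
    rintro g h ⟨hgV, hgE⟩ ⟨hhV, hhE⟩
    exact ⟨fun v => by rw [Aut.mul_onV, hgV, hhV], fun e => by rw [Aut.mul_onE, hgE, hhE]⟩
  inv_mem' := by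
    rintro g ⟨hgV, hgE⟩
    refine ⟨fun v => ?_, fun e => ?_⟩
    · have h := hgV (g.onV.symm v)
      rw [Equiv.apply_symm_apply] at h
      exact h.symm
    · have h := hgE (g.onE.symm e)
      rw [Equiv.apply_symm_apply] at h
      exact h.symm

theorem mem_coverGroup {Γ Δ : MGraph} {φ : Hom Γ Δ} {g : Aut Γ} :
    g ∈ coverGroup φ ↔ (∀ v, φ.onV (g.onV v) = φ.onV v) ∧ (∀ e, φ.onE (g.onE e) = φ.onE e) :=
  Iff.rfl

/-- A covering is regular if its cover group acts transitively on all fibers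
(of vertices and of edges). -/
def IsRegular {Γ Δ : MGraph} (φ : Hom Γ Δ) : Prop :=
  (∀ v w : Γ.V, φ.onV v = φ.onV w → ∃ g ∈ coverGroup φ, g.onV v = w) ∧
  (∀ e f : Γ.E, φ.onE e = φ.onE f → ∃ g ∈ coverGroup φ, g.onE e = f)

/-- The orbit equivalence on vertices induced by a subgroup of automorphisms. -/
def vSetoid (Γ : MGraph) (G : Subgroup (Aut Γ)) : Setoid Γ.V where
  r v w := ∃ g ∈ G, g.onV v = w
  iseqv := by
    refine ⟨fun v => ⟨1, one_mem _, rfl⟩, ?_, ?_⟩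
    · rintro v w ⟨g, hg, rfl⟩
      exact ⟨g⁻¹, inv_mem hg, g.onV.symm_apply_apply v⟩
    · rintro u v w ⟨g, hg, rfl⟩ ⟨h, hh, rfl⟩
      exact ⟨h * g, mul_mem hh hg, rfl⟩

/-- The orbit equivalence on edges induced by a subgroup of automorphisms. -/
def eSetoid (Γ : MGraph) (G : Subgroup (Aut Γ)) : Setoid Γ.E where
  r e f := ∃ g ∈ G, g.onE e = f
  iseqv := by
    refine ⟨fun e => ⟨1, one_mem _, rfl⟩, ?_, ?_⟩
    · rintro e f ⟨g, hg, rfl⟩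
      exact ⟨g⁻¹, inv_mem hg, g.onE.symm_apply_apply e⟩
    · rintro e f d ⟨g, hg, rfl⟩ ⟨h, hh, rfl⟩
      exact ⟨h * g, mul_mem hh hg, rfl⟩

/-- The quotient graph of `Γ` by a subgroup `G` of automorphisms. -/
def quotientGraph (Γ : MGraph) (G : Subgroup (Aut Γ)) : MGraph where
  V := Quotient (vSetoid Γ G)
  E := Quotient (eSetoid Γ G)
  ι := Quotient.map' Γ.ι (by rintro e f ⟨g, hg, rfl⟩; exact ⟨g, hg, (g.map_ι e).symm⟩)
  τ := Quotient.map' Γ.τ (by rintro e f ⟨g, hg, rfl⟩; exact ⟨g, hg, (g.map_τ e).symm⟩)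

/-- The canonical projection of a graph onto its quotient by a subgroup of automorphisms. -/
def quotientProj (Γ : MGraph) (G : Subgroup (Aut Γ)) : Hom Γ (quotientGraph Γ G) where
  onV := Quotient.mk (vSetoid Γ G)
  onE := Quotient.mk (eSetoid Γ G)
  map_ι e := rfl
  map_τ e := rfl

/-- A subgroup of automorphisms acts freely: nonidentity elements move every vertex. -/
def ActsFreely (Γ : MGraph) (G : Subgroup (Aut Γ)) : Prop :=
  ∀ g ∈ G, g ≠ 1 → ∀ v : Γ.V, g.onV v ≠ v

/-! ### Walks -/

/-- The vertex from which a step (edge together with a direction of traversal) departs. -/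
def stepSrc (Γ : MGraph) (s : Γ.E × Bool) : Γ.V := cond s.2 (Γ.ι s.1) (Γ.τ s.1)

/-- The vertex at which a step arrives. -/
def stepTgt (Γ : MGraph) (s : Γ.E × Bool) : Γ.V := cond s.2 (Γ.τ s.1) (Γ.ι s.1)

/-- A list of steps forms a chain starting at a given vertex. -/
def chain (Γ : MGraph) : Γ.V → List (Γ.E × Bool) → Prop
  | _, [] => True
  | v, s :: rest => stepSrc Γ s = v ∧ chain Γ (stepTgt Γ s) rest

/-- The final vertex after traversing a list of steps from a given vertex. -/
def endOf (Γ : MGraph) : Γ.V → List (Γ.E × Bool) → Γ.V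
  | v, [] => v
  | _, s :: rest => endOf Γ (stepTgt Γ s) rest

/-- A walk: an initial vertex and a compatible list of steps, each traversing an
edge either along (`true`) or against (`false`) its orientation. -/
structure Walk (Γ : MGraph) where
  first : Γ.V
  steps : List (Γ.E × Bool)
  ok : chain Γ first steps

/-- The terminal vertex of a walk. -/
def Walk.last {Γ : MGraph} (w : Walk Γ) : Γ.V := endOf Γ w.first w.steps

/-- Two vertices joined by a walk. -/
def Reachable (Γ : MGraph) (u v : Γ.V) : Prop :=
  ∃ w : Walk Γ, w.first = u ∧ w.last = v

/-- A graph is connected if any two vertices are joined by a walk. -/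
def Connected (Γ : MGraph) : Prop :=
  ∀ u v : Γ.V, Reachable Γ u v

def Hom.mapStep {Γ Δ : MGraph} (φ : Hom Γ Δ) (s : Γ.E × Bool) : Δ.E × Bool := (φ.onE s.1, s.2)

theorem Hom.stepSrc_map {Γ Δ : MGraph} (φ : Hom Γ Δ) (s : Γ.E × Bool) :
    stepSrc Δ (φ.mapStep s) = φ.onV (stepSrc Γ s) := by
  obtain ⟨e, b⟩ := s
  cases b <;> simp [stepSrc, Hom.mapStep, φ.map_ι, φ.map_τ]

theorem Hom.stepTgt_map {Γ Δ : MGraph} (φ : Hom Γ Δ) (s : Γ.E × Bool) :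
    stepTgt Δ (φ.mapStep s) = φ.onV (stepTgt Γ s) := by
  obtain ⟨e, b⟩ := s
  cases b <;> simp [stepTgt, Hom.mapStep, φ.map_ι, φ.map_τ]

theorem Hom.chain_map {Γ Δ : MGraph} (φ : Hom Γ Δ) (l : List (Γ.E × Bool)) (v : Γ.V)
    (h : chain Γ v l) : chain Δ (φ.onV v) (l.map φ.mapStep) := by
  induction l generalizing v with
  | nil => trivial
  | cons s rest ih =>
    exact ⟨by rw [φ.stepSrc_map, h.1], by rw [φ.stepTgt_map]; exact ih _ h.2⟩

/-- The image of a walk under a homomorphism (edge-by-edge, preserving directions). -/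
def Walk.map {Γ Δ : MGraph} (φ : Hom Γ Δ) (w : Walk Γ) : Walk Δ :=
  ⟨φ.onV w.first, w.steps.map φ.mapStep, φ.chain_map w.steps w.first w.ok⟩

theorem endOf_map {Γ Δ : MGraph} (φ : Hom Γ Δ) (l : List (Γ.E × Bool)) (v : Γ.V) :
    endOf Δ (φ.onV v) (l.map φ.mapStep) = φ.onV (endOf Γ v l) := by
  induction l generalizing v with
  | nil => rfl
  | cons s rest ih =>
    show endOf Δ (stepTgt Δ (φ.mapStep s)) (rest.map φ.mapStep) = _
    rw [φ.stepTgt_map]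
    exact ih _

theorem chain_append (Γ : MGraph) (l₁ l₂ : List (Γ.E × Bool)) (v : Γ.V)
    (h₁ : chain Γ v l₁) (h₂ : chain Γ (endOf Γ v l₁) l₂) : chain Γ v (l₁ ++ l₂) := by
  induction l₁ generalizing v with
  | nil => exact h₂
  | cons s rest ih => exact ⟨h₁.1, ih _ h₁.2 h₂⟩

theorem endOf_append (Γ : MGraph) (l₁ l₂ : List (Γ.E × Bool)) (v : Γ.V) :
    endOf Γ v (l₁ ++ l₂) = endOf Γ (endOf Γ v l₁) l₂ := by
  induction l₁ generalizing v with
  | nil => rfl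
  | cons s rest ih => exact ih _

/-- Concatenation of walks. -/
def Walk.append {Γ : MGraph} (w₁ w₂ : Walk Γ) (h : w₁.last = w₂.first) : Walk Γ :=
  ⟨w₁.first, w₁.steps ++ w₂.steps, chain_append Γ _ _ _ w₁.ok (by rw [show endOf Γ w₁.first w₁.steps = w₂.first from h]; exact w₂.ok)⟩

theorem Walk.append_last {Γ : MGraph} (w₁ w₂ : Walk Γ) (h : w₁.last = w₂.first) :
    (w₁.append w₂ h).last = w₂.last := by
  show endOf Γ w₁.first (w₁.steps ++ w₂.steps) = _
  rw [endOf_append, show endOf Γ w₁.first w₁.steps = w₂.first from h]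
  rfl

theorem Reachable.trans {Γ : MGraph} {u v w : Γ.V}
    (h₁ : Reachable Γ u v) (h₂ : Reachable Γ v w) : Reachable Γ u w := by
  obtain ⟨p, hp1, hp2⟩ := h₁
  obtain ⟨q, hq1, hq2⟩ := h₂
  exact ⟨p.append q (by rw [hp2, hq1]), hp1, by rw [Walk.append_last]; exact hq2⟩

/-- A single forward step along an edge, as a walk. -/
def Walk.single {Γ : MGraph} (e : Γ.E) : Walk Γ :=
  ⟨Γ.ι e, [(e, true)], ⟨rfl, trivial⟩⟩

def flipStep {Γ : MGraph} (s : Γ.E × Bool) : Γ.E × Bool := (s.1, !s.2)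

theorem stepSrc_flip (Γ : MGraph) (s : Γ.E × Bool) : stepSrc Γ (flipStep s) = stepTgt Γ s := by
  obtain ⟨e, b⟩ := s; cases b <;> rfl

theorem stepTgt_flip (Γ : MGraph) (s : Γ.E × Bool) : stepTgt Γ (flipStep s) = stepSrc Γ s := by
  obtain ⟨e, b⟩ := s; cases b <;> rfl

theorem endOf_reverse (Γ : MGraph) (l : List (Γ.E × Bool)) (v : Γ.V) (h : chain Γ v l) :
    endOf Γ (endOf Γ v l) (l.reverse.map flipStep) = v := by
  induction l generalizing v with
  | nil => rfl
  | cons s rest ih =>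
    rw [List.reverse_cons, List.map_append]
    show endOf Γ (endOf Γ (stepTgt Γ s) rest) ((rest.reverse.map flipStep) ++ [flipStep s]) = v
    rw [endOf_append, ih _ h.2]
    show stepTgt Γ (flipStep s) = v
    rw [stepTgt_flip]; exact h.1

theorem chain_reverse (Γ : MGraph) (l : List (Γ.E × Bool)) (v : Γ.V) (h : chain Γ v l) :
    chain Γ (endOf Γ v l) (l.reverse.map flipStep) := by
  induction l generalizing v with
  | nil => trivial
  | cons s rest ih =>
    rw [List.reverse_cons, List.map_append]
    show chain Γ (endOf Γ (stepTgt Γ s) rest) _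
    refine chain_append Γ _ _ _ (ih _ h.2) ?_
    rw [endOf_reverse Γ rest _ h.2]
    exact ⟨by rw [stepSrc_flip], trivial⟩

/-- The reversal of a walk. -/
def Walk.reverse {Γ : MGraph} (w : Walk Γ) : Walk Γ :=
  ⟨w.last, w.steps.reverse.map flipStep, chain_reverse Γ w.steps w.first w.ok⟩

theorem Walk.reverse_last {Γ : MGraph} (w : Walk Γ) : w.reverse.last = w.first :=
  endOf_reverse Γ w.steps w.first w.ok

theorem Reachable.refl' (Γ : MGraph) (v : Γ.V) : Reachable Γ v v :=
  ⟨⟨v, [], trivial⟩, rfl, rfl⟩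

theorem Reachable.symm' {Γ : MGraph} {u v : Γ.V} (h : Reachable Γ u v) : Reachable Γ v u := by
  obtain ⟨p, h1, h2⟩ := h
  exact ⟨p.reverse, by rw [show p.reverse.first = p.last from rfl, h2],
    by rw [p.reverse_last, h1]⟩

/-- The connected-component equivalence on vertices. -/
def reachSetoid (Γ : MGraph) : Setoid Γ.V where
  r := Reachable Γ
  iseqv := ⟨Reachable.refl' Γ, Reachable.symm', Reachable.trans⟩

/-! ### Subgraphs, trees, lifts -/

/-- A subgraph of a graph. -/
structure Subgraph (Γ : MGraph) where
  verts : Set Γ.V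
  edges : Set Γ.E
  ι_mem : ∀ e ∈ edges, Γ.ι e ∈ verts
  τ_mem : ∀ e ∈ edges, Γ.τ e ∈ verts

/-- The graph determined by a subgraph. -/
def Subgraph.toMGraph {Γ : MGraph} (H : Subgraph Γ) : MGraph where
  V := ↥H.verts
  E := ↥H.edges
  ι e := ⟨Γ.ι e.1, H.ι_mem e.1 e.2⟩
  τ e := ⟨Γ.τ e.1, H.τ_mem e.1 e.2⟩

/-- The inclusion homomorphism of a subgraph. -/
def Subgraph.incl {Γ : MGraph} (H : Subgraph Γ) : Hom H.toMGraph Γ :=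
  ⟨fun v => v.1, fun e => e.1, fun _ => rfl, fun _ => rfl⟩

/-- The set of endpoints of a set of edges. -/
def endpoints (Γ : MGraph) (S : Set Γ.E) : Set Γ.V := {v | ∃ e ∈ S, Γ.ι e = v ∨ Γ.τ e = v}

/-- The subgraph induced by a set of edges. -/
def edgeInduced (Γ : MGraph) (S : Set Γ.E) : Subgraph Γ where
  verts := endpoints Γ S
  edges := S
  ι_mem e he := ⟨e, he, Or.inl rfl⟩
  τ_mem e he := ⟨e, he, Or.inr rfl⟩

/-- The list of vertices visited when traversing a list of steps from a vertex. -/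
def vertsOf (Γ : MGraph) : Γ.V → List (Γ.E × Bool) → List Γ.V
  | v, [] => [v]
  | v, s :: rest => v :: vertsOf Γ (stepTgt Γ s) rest

/-- A path: a walk with no repeated edge and no repeated vertex
(except possibly the initial and terminal vertex coinciding). -/
def Walk.IsPath {Γ : MGraph} (w : Walk Γ) : Prop :=
  (w.steps.map Prod.fst).Nodup ∧
  (vertsOf Γ w.first w.steps).dropLast.Nodup ∧
  (vertsOf Γ w.first w.steps).tail.Nodup

/-- A cyclic walk: terminal vertex equals initial vertex. -/
def Walk.IsCyclic {Γ : MGraph} (w : Walk Γ) : Prop := w.last = w.first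

/-- A graph is acyclic if it has no nontrivial cyclic path. -/
def Acyclic (Γ : MGraph) : Prop :=
  ¬ ∃ w : Walk Γ, w.steps ≠ [] ∧ w.IsCyclic ∧ w.IsPath

/-- A spanning tree set: an edge set inducing an acyclic connected subgraph
containing all vertices. -/
def IsSpanningTreeSet (Δ : MGraph) (S : Set Δ.E) : Prop :=
  Acyclic (edgeInduced Δ S).toMGraph ∧ Connected (edgeInduced Δ S).toMGraph ∧
  ∀ v : Δ.V, v ∈ endpoints Δ S

/-- A lift of `Δ` with respect to a covering `φ : Γ → Δ`: a connected subgraph of `Γ`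
on whose edges `φ` restricts to a bijection onto the edges of `Δ`. -/
def IsLift {Γ Δ : MGraph} (φ : Hom Γ Δ) (Λ : Subgraph Γ) : Prop :=
  Connected Λ.toMGraph ∧ Set.BijOn φ.onE Λ.edges Set.univ

/-- A proper lift, with designated edge set `S₀` lifting a spanning tree set of `Δ`:
every edge of the lift has its initial endpoint among the endpoints of `S₀`
(the interior vertices). -/
def IsProperLiftWith {Γ Δ : MGraph} (φ : Hom Γ Δ) (Λ : Subgraph Γ) (S₀ : Set Γ.E) : Prop :=
  IsLift φ Λ ∧ S₀ ⊆ Λ.edges ∧ IsSpanningTreeSet Δ (φ.onE '' S₀) ∧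
  ∀ e ∈ Λ.edges, Γ.ι e ∈ endpoints Γ S₀

/-- A proper lift. -/
def IsProperLift {Γ Δ : MGraph} (φ : Hom Γ Δ) (Λ : Subgraph Γ) : Prop :=
  ∃ S₀ : Set Γ.E, IsProperLiftWith φ Λ S₀

/-! ### Voltage graphs -/

/-- The voltage of a walk: the ordered product of the voltages of its edges,
inverted when an edge is traversed against its orientation. -/
def voltage {Δ : MGraph} {G : Type} [Group G] (γ : Δ.E → G) (w : Walk Δ) : G :=
  (w.steps.map fun s => cond s.2 (γ s.1) (γ s.1)⁻¹).prod

/-- The derived graph of a voltage graph `(Δ, γ)`. -/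
def derivedGraph (Δ : MGraph) {G : Type} [Group G] (γ : Δ.E → G) : MGraph where
  V := Δ.V × G
  E := Δ.E × G
  ι e := (Δ.ι e.1, e.2)
  τ e := (Δ.τ e.1, e.2 * γ e.1)

/-- The canonical covering of a derived graph onto its base. -/
def derivedProj (Δ : MGraph) {G : Type} [Group G] (γ : Δ.E → G) : Hom (derivedGraph Δ γ) Δ :=
  ⟨Prod.fst, Prod.fst, fun _ => rfl, fun _ => rfl⟩

/-- Restriction of a voltage assignment to the subgroup generated by its values. -/
def restrictToClosure {G : Type} [Group G] {α : Type} (γ : α → G) :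
    α → Subgroup.closure (Set.range γ) :=
  fun a => ⟨γ a, Subgroup.subset_closure (Set.mem_range_self a)⟩

/-- The connected component of a vertex, as a subgraph. -/
def componentOf (Γ : MGraph) (v : Γ.V) : Subgraph Γ where
  verts := {u | Reachable Γ v u}
  edges := {e | Reachable Γ v (Γ.ι e)}
  ι_mem e he := he
  τ_mem e he := Reachable.trans he ⟨Walk.single e, rfl, rfl⟩

/-- `γ'` is the condensation of `γ` with respect to the spanning tree set `S` and the base
vertex `v₀`: edges of `S` get the identity, and an edge `e ∉ S` gets the voltage of the
return walk of `e` from `v₀` via `S`. -/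
def IsCondensation {Δ : MGraph} {G : Type} [Group G] (γ : Δ.E → G) (S : Set Δ.E)
    (v₀ : Δ.V) (γ' : Δ.E → G) : Prop :=
  (∀ e ∈ S, γ' e = 1) ∧
  ∀ e ∉ S, ∃ p₁ p₂ : Walk Δ,
    p₁.first = v₀ ∧ p₁.last = Δ.ι e ∧ p₂.first = Δ.τ e ∧ p₂.last = v₀ ∧
    p₁.IsPath ∧ p₂.IsPath ∧
    (∀ s ∈ p₁.steps, s.1 ∈ S) ∧ (∀ s ∈ p₂.steps, s.1 ∈ S) ∧
    γ' e = voltage γ p₁ * γ e * voltage γ p₂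

/-- `γ` is the voltage assignment on `Δ` with respect to the proper lift `Λ` (with interior
determined by `S₀`): interior edges of the lift give voltage `1`, and a boundary edge with
terminal endpoint in `g · V_Λ⁰` gives voltage `g`. -/
def IsVoltageWrt {Γ Δ : MGraph} (φ : Hom Γ Δ) (Λ : Subgraph Γ) (S₀ : Set Γ.E)
    (γ : Δ.E → Aut Γ) : Prop :=
  (∀ eΔ : Δ.E, γ eΔ ∈ coverGroup φ) ∧
  ∀ e ∈ Λ.edges,
    (Γ.τ e ∈ endpoints Γ S₀ → γ (φ.onE e) = 1) ∧
    (Γ.τ e ∉ endpoints Γ S₀ → Γ.τ e ∈ (γ (φ.onE e)).onV '' endpoints Γ S₀)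

/-- A good covering of a voltage graph: every cyclic walk of trivial voltage lifts
only to cyclic walks. -/
def IsGoodCovering {Δ Δtop : MGraph} {G : Type} [Group G] (γ : Δ.E → G)
    (μ : Hom Δtop Δ) : Prop :=
  ∀ p : Walk Δ, p.IsCyclic → voltage γ p = 1 →
    ∀ q : Walk Δtop, Walk.map μ q = p → q.IsCyclic

/-! ### Product graphs and common covers -/

/-- The product of two graphs. -/
def prodGraph (Δ₁ Δ₂ : MGraph) : MGraph where
  V := Δ₁.V × Δ₂.V
  E := Δ₁.E × Δ₂.E
  ι e := (Δ₁.ι e.1, Δ₂.ι e.2)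
  τ e := (Δ₁.τ e.1, Δ₂.τ e.2)

/-- First coordinate projection from a subgraph of a product graph. -/
def sgProj₁ {Δ₁ Δ₂ : MGraph} (H : Subgraph (prodGraph Δ₁ Δ₂)) : Hom H.toMGraph Δ₁ where
  onV v := (v.1 : Δ₁.V × Δ₂.V).1
  onE e := (e.1 : Δ₁.E × Δ₂.E).1
  map_ι e := rfl
  map_τ e := rfl

/-- Second coordinate projection from a subgraph of a product graph. -/
def sgProj₂ {Δ₁ Δ₂ : MGraph} (H : Subgraph (prodGraph Δ₁ Δ₂)) : Hom H.toMGraph Δ₂ where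
  onV v := (v.1 : Δ₁.V × Δ₂.V).2
  onE e := (e.1 : Δ₁.E × Δ₂.E).2
  map_ι e := rfl
  map_τ e := rfl

/-- A good common cover of two voltage graphs: a connected subgraph of the product graph
whose coordinate projections are coverings, each a good covering of the respective
voltage graph. -/
def IsGoodCommonCover {Δ₁ Δ₂ : MGraph} {K₁ K₂ : Type} [Group K₁] [Group K₂]
    (γ₁ : Δ₁.E → K₁) (γ₂ : Δ₂.E → K₂) (H : Subgraph (prodGraph Δ₁ Δ₂)) : Prop :=
  Connected H.toMGraph ∧
  IsCovering (sgProj₁ H) ∧ IsCovering (sgProj₂ H) ∧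
  IsGoodCovering γ₁ (sgProj₁ H) ∧ IsGoodCovering γ₂ (sgProj₂ H)

/-- A successful good common cover: both projections are regular, and there is an
automorphism `α` of the cover fixing a spanning tree set `S_⊤` such that the
correspondence between the condensed lifted voltages (via `α`) extends to a group
isomorphism of the generated voltage groups. -/
def IsSuccessfulGoodCommonCover {Δ₁ Δ₂ : MGraph} {K₁ K₂ : Type} [Group K₁] [Group K₂]
    (γ₁ : Δ₁.E → K₁) (γ₂ : Δ₂.E → K₂) (H : Subgraph (prodGraph Δ₁ Δ₂)) : Prop :=
  IsGoodCommonCover γ₁ γ₂ H ∧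
  IsRegular (sgProj₁ H) ∧ IsRegular (sgProj₂ H) ∧
  ∃ (Stop : Set H.toMGraph.E) (vtop : H.toMGraph.V)
    (γ₁' : H.toMGraph.E → K₁) (γ₂' : H.toMGraph.E → K₂) (α : Aut H.toMGraph),
    IsSpanningTreeSet H.toMGraph Stop ∧
    IsCondensation (fun e => γ₁ ((sgProj₁ H).onE e)) Stop vtop γ₁' ∧
    IsCondensation (fun e => γ₂ ((sgProj₂ H).onE e)) Stop vtop γ₂' ∧
    (∀ e ∈ Stop, α.onE e = e) ∧
    ∃ F : ↥(Subgroup.closure (Set.range γ₁')) ≃* ↥(Subgroup.closure (Set.range γ₂')),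
      ∀ e : H.toMGraph.E, (F (restrictToClosure γ₁' e) : K₂) = γ₂' (α.onE e)

/-- A good common cover with regular projections fails if it is not successful. -/
def FailsAsCommonCover {Δ₁ Δ₂ : MGraph} {K₁ K₂ : Type} [Group K₁] [Group K₂]
    (γ₁ : Δ₁.E → K₁) (γ₂ : Δ₂.E → K₂) (H : Subgraph (prodGraph Δ₁ Δ₂)) : Prop :=
  IsGoodCommonCover γ₁ γ₂ H ∧
  IsRegular (sgProj₁ H) ∧ IsRegular (sgProj₂ H) ∧
  ¬ IsSuccessfulGoodCommonCover γ₁ γ₂ H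

/-!
Lifting walks identifies `H` with the group of voltages of closed walks at `v₀`. Closed walks
in an acyclic graph have trivial voltage (cut the walk at a repeated vertex; a closed walk
without one is a cyclic path or a backtrack), so the voltage `t v` of a walk through `S` from
`v₀` to `v` is well defined, and `γ_S e = t (ι e) * γ e * (t (τ e))⁻¹`. Along a closed walk at
`v₀` these factors telescope, so its `γ`-voltage is its `γ_S`-voltage and lies in `⟨γ_S(E_Δ)⟩`;
conversely each `γ_S e` is the voltage of the closed return walk of `e`.
-/

section Voltage

variable {Γ : MGraph} {G : Type} [Group G]

def stepVal (γ : Γ.E → G) (s : Γ.E × Bool) : G := cond s.2 (γ s.1) (γ s.1)⁻¹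

def volList (γ : Γ.E → G) (l : List (Γ.E × Bool)) : G := (l.map (stepVal γ)).prod

theorem voltage_eq_volList (γ : Γ.E → G) (w : Walk Γ) : voltage γ w = volList γ w.steps := rfl

@[simp]
theorem volList_nil (γ : Γ.E → G) : volList γ [] = 1 := rfl

@[simp]
theorem volList_cons (γ : Γ.E → G) (s : Γ.E × Bool) (l : List (Γ.E × Bool)) :
    volList γ (s :: l) = stepVal γ s * volList γ l := by
  simp [volList]

@[simp]
theorem volList_append (γ : Γ.E → G) (l₁ l₂ : List (Γ.E × Bool)) :
    volList γ (l₁ ++ l₂) = volList γ l₁ * volList γ l₂ := by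
  simp [volList]

@[simp]
theorem stepVal_flipStep (γ : Γ.E → G) (s : Γ.E × Bool) :
    stepVal γ (flipStep s) = (stepVal γ s)⁻¹ := by
  obtain ⟨e, _ | _⟩ := s <;> simp [stepVal, flipStep]

theorem volList_reverse_map_flipStep (γ : Γ.E → G) (l : List (Γ.E × Bool)) :
    volList γ (l.reverse.map flipStep) = (volList γ l)⁻¹ := by
  induction l with
  | nil => simp
  | cons s l ih =>
    rw [List.reverse_cons, List.map_append, volList_append, ih]
    simp

theorem volList_map {Δ : MGraph} (φ : Hom Γ Δ) (γ : Δ.E → G) (l : List (Γ.E × Bool)) :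
    volList γ (l.map φ.mapStep) = volList (γ ∘ φ.onE) l := by
  simp only [volList, List.map_map]
  rfl

theorem volList_mem_closure (γ : Γ.E → G) (l : List (Γ.E × Bool)) :
    volList γ l ∈ Subgroup.closure (Set.range γ) := by
  refine Subgroup.list_prod_mem _ fun x hx => ?_
  obtain ⟨⟨e, b⟩, -, rfl⟩ := List.mem_map.1 hx
  have he : γ e ∈ Subgroup.closure (Set.range γ) := Subgroup.subset_closure ⟨e, rfl⟩
  cases b
  · exact inv_mem he
  · exact he

theorem stepVal_eq_conj {γ γ' : Γ.E → G} (t : Γ.V → G)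
    (h : ∀ e, γ' e = t (Γ.ι e) * γ e * (t (Γ.τ e))⁻¹) (s : Γ.E × Bool) :
    stepVal γ' s = t (stepSrc Γ s) * stepVal γ s * (t (stepTgt Γ s))⁻¹ := by
  obtain ⟨e, _ | _⟩ := s
  · simp only [stepVal, stepSrc, stepTgt, cond_false, h]
    group
  · simp only [stepVal, stepSrc, stepTgt, cond_true, h]

theorem volList_eq_conj {γ γ' : Γ.E → G} (t : Γ.V → G)
    (h : ∀ e, γ' e = t (Γ.ι e) * γ e * (t (Γ.τ e))⁻¹) {u : Γ.V} {l : List (Γ.E × Bool)}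
    (hch : chain Γ u l) : volList γ' l = t u * volList γ l * (t (endOf Γ u l))⁻¹ := by
  induction l generalizing u with
  | nil => simp [endOf]
  | cons s l ih =>
    rw [volList_cons, volList_cons, stepVal_eq_conj t h, ih hch.2, hch.1]
    simp only [endOf]
    group

end Voltage

section Chain

variable {Γ : MGraph}

theorem chain_append_iff {v : Γ.V} {l₁ l₂ : List (Γ.E × Bool)} :
    chain Γ v (l₁ ++ l₂) ↔ chain Γ v l₁ ∧ chain Γ (endOf Γ v l₁) l₂ := by
  induction l₁ generalizing v with
  | nil => simp [chain, endOf]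
  | cons s l ih => simp [chain, endOf, ih, and_assoc]

theorem chain_getElem {v : Γ.V} {l : List (Γ.E × Bool)} (hch : chain Γ v l) {i : ℕ}
    (hi : i < l.length) :
    stepSrc Γ l[i] = endOf Γ v (l.take i) ∧ stepTgt Γ l[i] = endOf Γ v (l.take (i + 1)) := by
  induction l generalizing v i with
  | nil => simp at hi
  | cons s l ih =>
    cases i with
    | zero => exact ⟨hch.1, rfl⟩
    | succ i => simpa [endOf] using ih hch.2 (by simpa using hi)

theorem vertsOf_eq (v : Γ.V) (l : List (Γ.E × Bool)) :
    vertsOf Γ v l = (List.range (l.length + 1)).map fun i => endOf Γ v (l.take i) := by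
  induction l generalizing v with
  | nil => simp [vertsOf, endOf]
  | cons s l ih =>
    rw [vertsOf, ih]
    conv_rhs => rw [List.length_cons, List.range_succ_eq_map, List.map_cons, List.map_map]
    rfl

theorem step_eq_or_eq_flipStep {s s' : Γ.E × Bool} (h : s.1 = s'.1) :
    s' = s ∨ s' = flipStep s := by
  obtain ⟨e, b⟩ := s
  obtain ⟨e', b'⟩ := s'
  obtain rfl : e = e' := h
  cases b <;> cases b' <;> simp [flipStep]

end Chain

section Acyclic

variable {Γ : MGraph}

theorem isPath_of_injOn {v : Γ.V} {l : List (Γ.E × Bool)} (hch : chain Γ v l)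
    (hcl : endOf Γ v l = v)
    (hinj : Set.InjOn (fun i => endOf Γ v (l.take i)) (Set.Iio l.length))
    (hedges : (l.map Prod.fst).Nodup) : Walk.IsPath ⟨v, l, hch⟩ := by
  have hlast : endOf Γ v (l.take l.length) = endOf Γ v (l.take 0) := by simpa [endOf] using hcl
  refine ⟨hedges, ?_, ?_⟩
  · rw [vertsOf_eq, ← List.map_dropLast, List.range_succ, List.dropLast_concat]
    exact (List.nodup_map_iff_inj_on List.nodup_range).2 fun i hi j hj =>
      hinj (List.mem_range.1 hi) (List.mem_range.1 hj)
  · rw [vertsOf_eq, ← List.map_tail, List.range_succ_eq_map, List.tail_cons, List.map_map]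
    refine (List.nodup_map_iff_inj_on List.nodup_range).2 fun i hi j hj hij => ?_
    simp only [List.mem_range, Function.comp_apply, Nat.succ_eq_add_one] at hi hj hij
    rcases Nat.lt_or_ge (i + 1) l.length with hi' | hi' <;>
      rcases Nat.lt_or_ge (j + 1) l.length with hj' | hj'
    · have := hinj hi' hj' hij
      omega
    · have := hinj hi' (show 0 < l.length by omega)
        (by rwa [show j + 1 = l.length by omega, hlast] at hij)
      omega
    · have := hinj (show 0 < l.length by omega) hj'
        (by rwa [show i + 1 = l.length by omega, hlast] at hij)
      omega
    · omega

theorem eq_pair_flipStep_of_injOn {v : Γ.V} {l : List (Γ.E × Bool)} (hch : chain Γ v l)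
    (hcl : endOf Γ v l = v)
    (hinj : Set.InjOn (fun i => endOf Γ v (l.take i)) (Set.Iio l.length))
    (hdup : ¬ (l.map Prod.fst).Nodup) : ∃ s, l = [s, flipStep s] := by
  obtain ⟨i, j, hi, hj, hij, he⟩ : ∃ (i j : ℕ) (hi : i < l.length) (hj : j < l.length),
      i < j ∧ l[i].1 = l[j].1 := by
    simpa [List.Nodup, List.pairwise_iff_getElem] using hdup
  have hinj' : ∀ a b, a < l.length → b < l.length →
      endOf Γ v (l.take a) = endOf Γ v (l.take b) → a = b := fun a b ha hb h => hinj ha hb h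
  obtain ⟨hsrc_i, htgt_i⟩ := chain_getElem hch hi
  obtain ⟨hsrc_j, htgt_j⟩ := chain_getElem hch hj
  rcases step_eq_or_eq_flipStep he with hs | hs
  · have := hinj' i j hi hj (by rw [← hsrc_i, ← hsrc_j, hs])
    omega
  obtain rfl : j = i + 1 := hinj' j (i + 1) hj (by omega) (by rw [← hsrc_j, hs, stepSrc_flip, htgt_i])
  have hn : l.length = i + 2 := by
    by_contra hn
    have := hinj' (i + 2) i (by omega) hi (by rw [← htgt_j, hs, stepTgt_flip, hsrc_i])
    omega
  obtain rfl : i = 0 := hinj' i 0 hi (by omega) (by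
    rw [← hsrc_i, ← stepTgt_flip, ← hs, htgt_j, ← hn, List.take_length, hcl]
    rfl)
  obtain ⟨a, b, rfl⟩ := List.length_eq_two.1 hn
  exact ⟨a, by simpa using hs⟩

theorem exists_closed_segment_of_not_injOn {v : Γ.V} {l : List (Γ.E × Bool)}
    (hinj : ¬ Set.InjOn (fun i => endOf Γ v (l.take i)) (Set.Iio l.length)) :
    ∃ a b c, l = a ++ b ++ c ∧ 0 < b.length ∧ 0 < c.length ∧
      endOf Γ v a = endOf Γ v (a ++ b) := by
  obtain ⟨i, j, hij, hj, hf⟩ : ∃ i j, i < j ∧ j < l.length ∧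
      endOf Γ v (l.take i) = endOf Γ v (l.take j) := by
    simp only [Set.InjOn, Set.mem_Iio, not_forall] at hinj
    obtain ⟨a, ha, b, hb, hab, hne⟩ := hinj
    rcases Nat.lt_or_gt_of_ne hne with h | h
    · exact ⟨a, b, h, hb, hab⟩
    · exact ⟨b, a, h, ha, hab.symm⟩
  have hsplit : l.take i ++ (l.take j).drop i = l.take j := by
    conv_rhs => rw [← List.take_append_drop i (l.take j)]
    rw [List.take_take, min_eq_left hij.le]
  refine ⟨l.take i, (l.take j).drop i, l.drop j, ?_, ?_, ?_, ?_⟩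
  · rw [hsplit, List.take_append_drop]
  · simp only [List.length_drop, List.length_take]
    omega
  · simp only [List.length_drop]
    omega
  · rw [hsplit, hf]

theorem volList_eq_one_of_acyclic {G : Type} [Group G] (hA : Acyclic Γ) (γ : Γ.E → G)
    {v : Γ.V} {l : List (Γ.E × Bool)} (hch : chain Γ v l) (hcl : endOf Γ v l = v) :
    volList γ l = 1 := by
  by_cases hinj : Set.InjOn (fun i => endOf Γ v (l.take i)) (Set.Iio l.length)
  · by_cases hedges : (l.map Prod.fst).Nodup
    · obtain rfl | hne := eq_or_ne l []
      · rfl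
      · exact (hA ⟨⟨v, l, hch⟩, hne, hcl, isPath_of_injOn hch hcl hinj hedges⟩).elim
    · obtain ⟨s, rfl⟩ := eq_pair_flipStep_of_injOn hch hcl hinj hedges
      simp
  obtain ⟨a, b, c, rfl, hb, hc, hab⟩ := exists_closed_segment_of_not_injOn hinj
  obtain ⟨hab_ch, hc_ch⟩ := chain_append_iff.1 hch
  obtain ⟨ha_ch, hb_ch⟩ := chain_append_iff.1 hab_ch
  rw [endOf_append] at hab hc_ch
  rw [endOf_append, endOf_append, ← hab] at hcl
  rw [← hab] at hc_ch
  have hb_one : volList γ b = 1 := volList_eq_one_of_acyclic hA γ hb_ch hab.symm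
  have hac_one : volList γ (a ++ c) = 1 :=
    volList_eq_one_of_acyclic hA γ (chain_append_iff.2 ⟨ha_ch, hc_ch⟩)
      (by rwa [endOf_append])
  simpa [hb_one] using hac_one
termination_by l.length
decreasing_by all_goals subst_vars; simp only [List.length_append]; omega

end Acyclic

section SpanningTree

variable {Δ : MGraph} {S : Set Δ.E} {G : Type} [Group G]

theorem exists_lift_edgeInduced {v : (edgeInduced Δ S).toMGraph.V} {l : List (Δ.E × Bool)}
    (hl : ∀ s ∈ l, s.1 ∈ S) (hch : chain Δ v.1 l) :
    ∃ l' : List ((edgeInduced Δ S).toMGraph.E × Bool),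
      l'.map (edgeInduced Δ S).incl.mapStep = l ∧ chain (edgeInduced Δ S).toMGraph v l' := by
  induction l generalizing v with
  | nil => exact ⟨[], rfl, trivial⟩
  | cons s l ih =>
    obtain ⟨e, b⟩ := s
    let s' : (edgeInduced Δ S).toMGraph.E × Bool := (⟨e, hl _ List.mem_cons_self⟩, b)
    have hsrc : stepSrc (edgeInduced Δ S).toMGraph s' = v :=
      Subtype.ext (by rw [← hch.1]; cases b <;> rfl)
    have htgt : (stepTgt (edgeInduced Δ S).toMGraph s').1 = stepTgt Δ (e, b) := by
      cases b <;> rfl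
    obtain ⟨l', hl', hch'⟩ :=
      ih (fun t ht => hl t (List.mem_cons_of_mem _ ht)) (htgt ▸ hch.2)
    exact ⟨s' :: l', by rw [List.map_cons, hl']; rfl, hsrc, hch'⟩

theorem volList_eq_one_of_isSpanningTreeSet (hS : IsSpanningTreeSet Δ S) (γ : Δ.E → G)
    {v : Δ.V} {l : List (Δ.E × Bool)} (hl : ∀ s ∈ l, s.1 ∈ S) (hch : chain Δ v l)
    (hcl : endOf Δ v l = v) : volList γ l = 1 := by
  obtain ⟨l', rfl, hch'⟩ := exists_lift_edgeInduced (v := ⟨v, hS.2.2 v⟩) hl hch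
  rw [volList_map]
  exact volList_eq_one_of_acyclic hS.1 _ hch'
    (Subtype.ext ((endOf_map (edgeInduced Δ S).incl l' _).symm.trans hcl))

theorem exists_chain_of_isSpanningTreeSet (hS : IsSpanningTreeSet Δ S) (u v : Δ.V) :
    ∃ l : List (Δ.E × Bool), (∀ s ∈ l, s.1 ∈ S) ∧ chain Δ u l ∧ endOf Δ u l = v := by
  obtain ⟨⟨p, l, hch⟩, rfl, hend⟩ := hS.2.1 ⟨u, hS.2.2 u⟩ ⟨v, hS.2.2 v⟩
  refine ⟨l.map (edgeInduced Δ S).incl.mapStep, ?_, (edgeInduced Δ S).incl.chain_map l _ hch, ?_⟩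
  · simp only [List.mem_map]
    rintro _ ⟨t, -, rfl⟩
    exact t.1.2
  · exact (endOf_map (edgeInduced Δ S).incl l ⟨u, _⟩).trans (congrArg Subtype.val hend)

def IsTreePotential (γ : Δ.E → G) (S : Set Δ.E) (v₀ : Δ.V) (t : Δ.V → G) : Prop :=
  ∀ (l : List (Δ.E × Bool)) (v : Δ.V),
    (∀ s ∈ l, s.1 ∈ S) → chain Δ v₀ l → endOf Δ v₀ l = v → volList γ l = t v

theorem exists_isTreePotential (hS : IsSpanningTreeSet Δ S) (γ : Δ.E → G) (v₀ : Δ.V) :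
    ∃ t, IsTreePotential γ S v₀ t := by
  choose path hpath_mem hpath_ch hpath_end using exists_chain_of_isSpanningTreeSet hS v₀
  refine ⟨fun v => volList γ (path v), fun l v hl hch hend => ?_⟩
  have hrev_ch := chain_reverse Δ (path v) v₀ (hpath_ch v)
  have hrev_end := endOf_reverse Δ (path v) v₀ (hpath_ch v)
  rw [hpath_end] at hrev_ch hrev_end
  have hloop := volList_eq_one_of_isSpanningTreeSet hS γ
    (l := l ++ (path v).reverse.map flipStep) ?_
    (chain_append_iff.2 ⟨hch, hend ▸ hrev_ch⟩) (by rw [endOf_append, hend, hrev_end])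
  · rwa [volList_append, volList_reverse_map_flipStep, mul_inv_eq_one] at hloop
  · simp only [List.mem_append, List.mem_map, List.mem_reverse]
    rintro _ (hs | ⟨t, ht, rfl⟩)
    · exact hl _ hs
    · exact hpath_mem v t ht

end SpanningTree

section Loops

variable {Γ : MGraph} {G : Type} [Group G]

def loopSubgroup (γ : Γ.E → G) (v₀ : Γ.V) : Subgroup G where
  carrier := {h | ∃ l, chain Γ v₀ l ∧ endOf Γ v₀ l = v₀ ∧ volList γ l = h}
  one_mem' := ⟨[], trivial, rfl, rfl⟩
  mul_mem' := by
    rintro _ _ ⟨l₁, hch₁, hend₁, rfl⟩ ⟨l₂, hch₂, hend₂, rfl⟩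
    exact ⟨l₁ ++ l₂, chain_append_iff.2 ⟨hch₁, by rwa [hend₁]⟩,
      by rw [endOf_append, hend₁, hend₂], volList_append γ l₁ l₂⟩
  inv_mem' := by
    rintro _ ⟨l, hch, hend, rfl⟩
    refine ⟨l.reverse.map flipStep, ?_, ?_, volList_reverse_map_flipStep γ l⟩
    · simpa only [hend] using chain_reverse Γ l v₀ hch
    · simpa only [hend] using endOf_reverse Γ l v₀ hch

theorem mem_loopSubgroup {γ : Γ.E → G} {v₀ : Γ.V} {h : G} :
    h ∈ loopSubgroup γ v₀ ↔ ∃ l, chain Γ v₀ l ∧ endOf Γ v₀ l = v₀ ∧ volList γ l = h :=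
  Iff.rfl

end Loops

namespace IsCondensation

variable {Δ : MGraph} {G : Type} [Group G] {γ γS : Δ.E → G} {S : Set Δ.E} {v₀ : Δ.V}

theorem mem_loopSubgroup (hcond : IsCondensation γ S v₀ γS) (e : Δ.E) :
    γS e ∈ loopSubgroup γ v₀ := by
  by_cases he : e ∈ S
  · rw [hcond.1 e he]
    exact one_mem _
  obtain ⟨p₁, p₂, rfl, hp₁, hp₂, hp₂', -, -, -, -, hγS⟩ := hcond.2 e he
  have hch₂ : chain Δ (Δ.τ e) p₂.steps := hp₂ ▸ p₂.ok
  refine ⟨p₁.steps ++ (e, true) :: p₂.steps, chain_append_iff.2 ⟨p₁.ok, ?_⟩, ?_, ?_⟩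
  · exact ⟨hp₁.symm, hch₂⟩
  · rw [endOf_append, show endOf Δ p₁.first p₁.steps = Δ.ι e from hp₁, ← hp₂']
    show endOf Δ (Δ.τ e) p₂.steps = endOf Δ p₂.first p₂.steps
    rw [hp₂]
  · rw [hγS, voltage_eq_volList, voltage_eq_volList, volList_append, volList_cons, ← mul_assoc]
    rfl

theorem eq_conj (hS : IsSpanningTreeSet Δ S) (hcond : IsCondensation γ S v₀ γS)
    {t : Δ.V → G} (ht : IsTreePotential γ S v₀ t) (e : Δ.E) :
    γS e = t (Δ.ι e) * γ e * (t (Δ.τ e))⁻¹ := by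
  by_cases he : e ∈ S
  · obtain ⟨l, hl, hch, hend⟩ := exists_chain_of_isSpanningTreeSet hS v₀ (Δ.ι e)
    have hι := ht l _ hl hch hend
    have hτ := ht (l ++ [(e, true)]) (Δ.τ e) (fun s hs => (List.mem_append.1 hs).elim (hl s)
      fun hs => by rw [List.mem_singleton.1 hs]; exact he)
      (chain_append_iff.2 ⟨hch, by rw [hend]; exact ⟨rfl, trivial⟩⟩)
      (by rw [endOf_append, hend]; rfl)
    rw [hcond.1 e he, ← hι, ← hτ, volList_append]
    simp [stepVal]
  obtain ⟨p₁, p₂, rfl, hp₁, hp₂, hp₂', -, -, hp₁S, hp₂S, hγS⟩ := hcond.2 e he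
  have hι : voltage γ p₁ = t (Δ.ι e) := ht _ _ hp₁S p₁.ok hp₁
  have hτ : (voltage γ p₂)⁻¹ = t (Δ.τ e) := by
    rw [voltage_eq_volList, ← volList_reverse_map_flipStep]
    refine ht _ _ ?_ (hp₂' ▸ p₂.reverse.ok) (hp₂ ▸ hp₂' ▸ p₂.reverse_last)
    simp only [List.mem_map, List.mem_reverse]
    rintro _ ⟨s, hs, rfl⟩
    exact hp₂S s hs
  rw [hγS, hι, ← hτ, inv_inv]

end IsCondensation

section Derived

variable {Δ : MGraph} {G : Type} [Group G]

theorem stepTgt_derivedGraph (γ : Δ.E → G) (s : (derivedGraph Δ γ).E × Bool) :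
    stepTgt (derivedGraph Δ γ) s = (stepTgt Δ ((derivedProj Δ γ).mapStep s),
      (stepSrc (derivedGraph Δ γ) s).2 * stepVal γ ((derivedProj Δ γ).mapStep s)) := by
  obtain ⟨⟨e, k⟩, _ | _⟩ := s
  · simp [stepTgt, stepSrc, stepVal, derivedGraph, derivedProj, Hom.mapStep]
  · rfl

theorem endOf_derivedGraph (γ : Δ.E → G) {p : Δ.V × G}
    {l : List ((derivedGraph Δ γ).E × Bool)} (hch : chain (derivedGraph Δ γ) p l) :
    endOf (derivedGraph Δ γ) p l = (endOf Δ p.1 (l.map (derivedProj Δ γ).mapStep),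
      p.2 * volList γ (l.map (derivedProj Δ γ).mapStep)) := by
  induction l generalizing p with
  | nil => exact Prod.ext rfl (mul_one _).symm
  | cons s l ih =>
    obtain ⟨hsrc, hch⟩ := hch
    simp only [endOf, List.map_cons, volList_cons]
    rw [ih hch, stepTgt_derivedGraph, hsrc, mul_assoc]

theorem exists_lift_derivedGraph (γ : Δ.E → G) {v : Δ.V} {l : List (Δ.E × Bool)}
    (hch : chain Δ v l) (k : G) :
    ∃ l', l'.map (derivedProj Δ γ).mapStep = l ∧ chain (derivedGraph Δ γ) (v, k) l' := by
  induction l generalizing v k with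
  | nil => exact ⟨[], rfl, trivial⟩
  | cons s l ih =>
    obtain ⟨hsrc, hch⟩ := hch
    obtain ⟨s', hs', hsrc'⟩ : ∃ s', (derivedProj Δ γ).mapStep s' = s ∧
        stepSrc (derivedGraph Δ γ) s' = (v, k) := by
      obtain ⟨e, _ | _⟩ := s
      · exact ⟨((e, k * (γ e)⁻¹), false), rfl, by simp [stepSrc, derivedGraph, ← hsrc]⟩
      · exact ⟨((e, k), true), rfl, by simp [stepSrc, derivedGraph, ← hsrc]⟩
    have htgt : stepTgt (derivedGraph Δ γ) s' = (stepTgt Δ s, k * stepVal γ s) := by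
      rw [stepTgt_derivedGraph, hsrc', hs']
    obtain ⟨l', hl', hch'⟩ := ih hch (k * stepVal γ s)
    exact ⟨s' :: l', by rw [List.map_cons, hs', hl'], hsrc', htgt ▸ hch'⟩

theorem reachable_derivedGraph_iff (γ : Δ.E → G) {u w : Δ.V} {k k' : G} :
    Reachable (derivedGraph Δ γ) (u, k) (w, k') ↔
      ∃ l, chain Δ u l ∧ endOf Δ u l = w ∧ k * volList γ l = k' := by
  constructor
  · rintro ⟨⟨p, l, hch⟩, rfl, hend⟩
    refine ⟨l.map (derivedProj Δ γ).mapStep, (derivedProj Δ γ).chain_map l _ hch, ?_⟩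
    have := endOf_derivedGraph γ hch
    exact Prod.mk.inj (this.symm.trans hend)
  · rintro ⟨l, hch, rfl, rfl⟩
    obtain ⟨l', rfl, hch'⟩ := exists_lift_derivedGraph γ hch k
    exact ⟨⟨(u, k), l', hch'⟩, rfl, endOf_derivedGraph γ hch'⟩

theorem setOf_reachable_derivedGraph_eq_loopSubgroup (γ : Δ.E → G) (v₀ : Δ.V) :
    {h : G | Reachable (derivedGraph Δ γ) (v₀, 1) (v₀, h)} = loopSubgroup γ v₀ := by
  ext h
  simp only [Set.mem_ofPred_eq, reachable_derivedGraph_iff, one_mul, SetLike.mem_coe,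
    mem_loopSubgroup]

end Derived

theorem component_stabilizer_eq_condensation_closure_general {Δ : MGraph} {G : Type} [Group G]
    (γ : Δ.E → G)
    (v₀ : Δ.V) (S : Set Δ.E) (hS : IsSpanningTreeSet Δ S)
    (γS : Δ.E → G) (hcond : IsCondensation γ S v₀ γS) :
    {h : G | Reachable (derivedGraph Δ γ) (v₀, 1) (v₀, h)} =
      (Subgroup.closure (Set.range γS) : Set G) := by
  rw [setOf_reachable_derivedGraph_eq_loopSubgroup]
  refine congrArg SetLike.coe (le_antisymm ?_ ((Subgroup.closure_le _).2 ?_))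
  · rintro _ ⟨l, hch, hcl, rfl⟩
    obtain ⟨t, ht⟩ := exists_isTreePotential hS γ v₀
    have ht₀ : t v₀ = 1 := (ht [] v₀ (by simp) trivial rfl).symm
    have hconj := volList_eq_conj t (hcond.eq_conj hS ht) hch
    rw [hcl, ht₀, one_mul, inv_one, mul_one] at hconj
    exact hconj ▸ volList_mem_closure γS l
  · rintro _ ⟨e, rfl⟩
    exact hcond.mem_loopSubgroup e

/-- Let `(Δ, γ)` be a connected voltage graph whose voltages generate
`G`, `v₀` a base vertex, `S` a spanning tree set, and `Γ₀` the component of `Δ ×_γ G`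
containing `(v₀, 1)`.  Then `H = {h ∈ G : (v₀, h) ∈ Γ₀}` coincides with the subgroup
`⟨γ_S(E_Δ)⟩` generated by the values of the condensation `γ_S` (in particular it is a
subgroup of `G`). -/
theorem component_stabilizer_eq_condensation_closure {Δ : MGraph} {G : Type} [Group G]
    (γ : Δ.E → G) (hΔ : Connected Δ)
    (hgen : Subgroup.closure (Set.range γ) = ⊤)
    (v₀ : Δ.V) (S : Set Δ.E) (hS : IsSpanningTreeSet Δ S)
    (γS : Δ.E → G) (hcond : IsCondensation γ S v₀ γS) :
    {h : G | Reachable (derivedGraph Δ γ) (v₀, 1) (v₀, h)} =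
      (Subgroup.closure (Set.range γS) : Set G) :=
  component_stabilizer_eq_condensation_closure_general γ v₀ S hS γS hcond
end VG
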